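/- The map β : (u₂, u₄, u_{6,1}, u_{6,2}) ↦ (β₂, β₄, β_{6,1}, β_{6,2}), defined on a neighborhood of the origin of ℝ⁴, is differentiable at the origin (the Gaussian fixed point), and its Jacobian matrix there equals [[−2, −6√(2π), 0, 0], [0, −1, −4√(2π), −16√(2π)], [0, 0, 0, 0], [0, 0, 0, 0]]; in particular this matrix has eigenvalues −2, −1, 0, 0, with respective eigenvectors (1,0,0,0), (−6√(2π),1,0,0), (0,0,−4,1) and (96π, −16√(2π), 0, 1). -/

import Mathlib

/-!  The truncated functional renormalization group flow of the rank-4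
`SU(2)` group field theory in the `φ⁶` necklace truncation
(Carrozza–Lahoche–Oriti). -/

open Real MeasureTheory

/-- The loop integral `f_k(u₂)`. -/
noncomputable def fInt (k : ℕ) (u : ℝ) : ℝ :=
  2 * Real.sqrt 2 * ∫ x in Set.Ioi (0 : ℝ),
    x ^ 6 * Real.exp (-x ^ 2) * (1 - Real.exp (-x ^ 2)) ^ (k - 1) /
      (x ^ 2 + u * (1 - Real.exp (-x ^ 2))) ^ (k + 1)

/-- The loop integral `g_k(u₂)`. -/
noncomputable def gInt (k : ℕ) (u : ℝ) : ℝ :=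
  2 * Real.sqrt 2 * ∫ x in Set.Ioi (0 : ℝ),
    x ^ 4 * Real.exp (-x ^ 2) * (1 - Real.exp (-x ^ 2)) ^ k /
      (x ^ 2 + u * (1 - Real.exp (-x ^ 2))) ^ (k + 1)

/-- The wave-function integral `f_w(u₂)`. -/
noncomputable def fw (u : ℝ) : ℝ :=
  9 * Real.sqrt 2 * ∫ x in Set.Ioi (0 : ℝ),
    Real.exp (-x ^ 2) * (x ^ 2 / (x ^ 2 + u * (1 - Real.exp (-x ^ 2)))) ^ 2

/-- The wave-function integral `g_w(u₂)`. -/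
noncomputable def gw (u : ℝ) : ℝ :=
  9 * Real.sqrt 2 * ∫ x in Set.Ioi (0 : ℝ),
    Real.exp (-x ^ 2) * (1 - Real.exp (-x ^ 2)) *
      (x / (x ^ 2 + u * (1 - Real.exp (-x ^ 2)))) ^ 2

/-- The anomalous dimension `η(u₂, u₄)`. -/
noncomputable def eta (u2 u4 : ℝ) : ℝ := fw u2 * u4 / (1 - gw u2 * u4 / 2)

/-- The loop coefficient `L_k(u₂, u₄) = 2 f_k(u₂) + η g_k(u₂)`. -/
noncomputable def Lk (k : ℕ) (u2 u4 : ℝ) : ℝ :=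
  2 * fInt k u2 + eta u2 u4 * gInt k u2

/-- The beta function `β₂`. -/
noncomputable def beta2 (u2 u4 : ℝ) : ℝ :=
  -(2 + eta u2 u4) * u2 - 6 * Lk 1 u2 u4 * u4

/-- The beta function `β₄`. -/
noncomputable def beta4 (u2 u4 u61 u62 : ℝ) : ℝ :=
  -(1 + 2 * eta u2 u4) * u4 - 4 * Lk 1 u2 u4 * (u61 + 4 * u62) +
    4 * Lk 2 u2 u4 * u4 ^ 2

/-- The beta function `β_{6,1}`. -/
noncomputable def beta61 (u2 u4 u61 : ℝ) : ℝ :=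
  -3 * eta u2 u4 * u61 + 12 * Lk 2 u2 u4 * u4 * u61 - 6 * Lk 3 u2 u4 * u4 ^ 3

/-- The beta function `β_{6,2}`. -/
noncomputable def beta62 (u2 u4 u62 : ℝ) : ℝ :=
  -3 * eta u2 u4 * u62 + 8 * Lk 2 u2 u4 * u4 * u62

/-- The truncated flow `(u₂, u₄, u_{6,1}, u_{6,2}) ↦ (β₂, β₄, β_{6,1}, β_{6,2})`. -/
noncomputable def betaMap : (Fin 4 → ℝ) → (Fin 4 → ℝ) := fun u =>
  ![beta2 (u 0) (u 1), beta4 (u 0) (u 1) (u 2) (u 3),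
    beta61 (u 0) (u 1) (u 2), beta62 (u 0) (u 1) (u 3)]

/-- The stability matrix of the truncated flow at the Gaussian fixed point. -/
noncomputable def gfpJac : Matrix (Fin 4) (Fin 4) ℝ :=
  !![-2, -6 * Real.sqrt (2 * π), 0, 0;
     0, -1, -4 * Real.sqrt (2 * π), -16 * Real.sqrt (2 * π);
     0, 0, 0, 0;
     0, 0, 0, 0]

/-! For `|u₂| ≤ 1/2` the denominator `x² + u₂(1 - e^{-x²})` is at least `x²/2`, and
`1 - e^{-x²} ≤ x²`, so every loop integrand is dominated by a multiple of `x² e^{-x²}` or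
`e^{-x²}`; by dominated convergence the loop integrals are continuous at `u₂ = 0`. Hence
`η → 0` and `L_k → 2 f_k(0)` at the origin, and each beta function is a sum of terms
`a(u) · u_j` whose coefficient `a` has a limit `c` at `0`; such a term has derivative `c · u_j`
there. The only non-zero limits are the canonical dimensions and
`L₁(0,0) = 2 f₁(0) = 4√2 ∫₀^∞ x² e^{-x²} dx = √(2π)`. -/

open Set Filter Topology Asymptotics

section LoopIntegral

/-- `f_k = 2√2 · loopIntegral 3 (k-1) (k+1)`, `g_k = 2√2 · loopIntegral 2 k (k+1)`,
`f_w = 9√2 · loopIntegral 2 0 2` and `g_w = 9√2 · loopIntegral 1 1 2`. -/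
noncomputable def loopIntegral (a b c : ℕ) (u : ℝ) : ℝ :=
  ∫ x in Ioi (0 : ℝ), exp (-x ^ 2) *
    ((x ^ 2) ^ a * (1 - exp (-x ^ 2)) ^ b / (x ^ 2 + u * (1 - exp (-x ^ 2))) ^ c)

lemma one_sub_exp_neg_sq_nonneg (x : ℝ) : 0 ≤ 1 - exp (-x ^ 2) := by
  have : exp (-x ^ 2) ≤ 1 := exp_le_one_iff.2 (neg_nonpos.2 (sq_nonneg x))
  linarith

lemma one_sub_exp_neg_sq_le (x : ℝ) : 1 - exp (-x ^ 2) ≤ x ^ 2 := by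
  linarith [add_one_le_exp (-x ^ 2)]

lemma half_le_add_mul {y e u : ℝ} (he : 0 ≤ e) (hey : e ≤ y) (hu : |u| ≤ 1 / 2) :
    y / 2 ≤ y + u * e := by
  obtain ⟨h₁, h₂⟩ := abs_le.1 hu
  nlinarith

lemma abs_pow_mul_pow_div_le {y e u : ℝ} {a b c : ℕ} (hc : c ≤ a + b) (hy : 0 < y)
    (he : 0 ≤ e) (hey : e ≤ y) (hu : |u| ≤ 1 / 2) :
    |y ^ a * e ^ b / (y + u * e) ^ c| ≤ 2 ^ c * y ^ (a + b - c) := by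
  have hD := half_le_add_mul he hey hu
  have hD₀ : 0 < y + u * e := by linarith
  rw [abs_of_nonneg (by positivity)]
  calc y ^ a * e ^ b / (y + u * e) ^ c
      ≤ y ^ (a + b) / (y / 2) ^ c := by
        rw [pow_add]
        gcongr
    _ = 2 ^ c * y ^ (a + b - c) := by
        rw [div_pow, ← Nat.add_sub_cancel' hc, pow_add, Nat.add_sub_cancel_left]
        field_simp

lemma integrableOn_sq_pow_mul_exp_neg_sq (n : ℕ) :
    IntegrableOn (fun x : ℝ => (x ^ 2) ^ n * exp (-x ^ 2)) (Ioi 0) := by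
  have := integrableOn_rpow_mul_exp_neg_rpow (s := ((2 * n : ℕ) : ℝ)) (p := 2)
    (neg_one_lt_zero.trans_le (Nat.cast_nonneg _)) two_pos
  simp only [rpow_natCast, rpow_two, pow_mul] at this
  exact this

variable {a b c : ℕ}

lemma norm_loopIntegrand_le (hc : c ≤ a + b) {u x : ℝ} (hu : |u| ≤ 1 / 2) (hx : 0 < x) :
    ‖exp (-x ^ 2) *
        ((x ^ 2) ^ a * (1 - exp (-x ^ 2)) ^ b / (x ^ 2 + u * (1 - exp (-x ^ 2))) ^ c)‖ ≤
      2 ^ c * ((x ^ 2) ^ (a + b - c) * exp (-x ^ 2)) := by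
  rw [norm_mul, norm_of_nonneg (exp_pos _).le, Real.norm_eq_abs]
  calc exp (-x ^ 2) *
        |(x ^ 2) ^ a * (1 - exp (-x ^ 2)) ^ b / (x ^ 2 + u * (1 - exp (-x ^ 2))) ^ c|
      ≤ exp (-x ^ 2) * (2 ^ c * (x ^ 2) ^ (a + b - c)) := by
        gcongr
        exact abs_pow_mul_pow_div_le hc (by positivity) (one_sub_exp_neg_sq_nonneg x)
          (one_sub_exp_neg_sq_le x) hu
    _ = 2 ^ c * ((x ^ 2) ^ (a + b - c) * exp (-x ^ 2)) := by ring

lemma continuousAt_loopIntegral (hc : c ≤ a + b) {u₀ : ℝ} (hu₀ : |u₀| < 1 / 2) :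
    ContinuousAt (loopIntegral a b c) u₀ := by
  have hnear : ∀ᶠ u in 𝓝 u₀, |u| ≤ 1 / 2 :=
    (continuous_abs.continuousAt.eventually_lt continuousAt_const hu₀).mono fun _ h => h.le
  refine continuousAt_of_dominated
    (bound := fun x => 2 ^ c * ((x ^ 2) ^ (a + b - c) * exp (-x ^ 2)))
    (Eventually.of_forall fun u => by fun_prop) ?_
    ((integrableOn_sq_pow_mul_exp_neg_sq _).const_mul _) ?_
  · filter_upwards [hnear] with u hu
    exact ae_restrict_of_forall_mem measurableSet_Ioi fun x hx => norm_loopIntegrand_le hc hu hx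
  · refine ae_restrict_of_forall_mem measurableSet_Ioi fun x (hx : 0 < x) => ?_
    have hD := half_le_add_mul (one_sub_exp_neg_sq_nonneg x) (one_sub_exp_neg_sq_le x) hu₀.le
    have hpos : 0 < x ^ 2 + u₀ * (1 - exp (-x ^ 2)) := by nlinarith
    have : (x ^ 2 + u₀ * (1 - exp (-x ^ 2))) ^ c ≠ 0 := pow_ne_zero _ hpos.ne'
    fun_prop (disch := assumption)

lemma loopIntegral_three_zero_two_zero : loopIntegral 3 0 2 0 = √π / 4 := by
  have h := integral_rpow_mul_exp_neg_rpow (p := 2) (q := 2) two_pos (by norm_num)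
  rw [show ((2 : ℝ) + 1) / 2 = 1 / 2 + 1 by norm_num, Gamma_add_one (by norm_num),
    Gamma_one_half_eq] at h
  simp only [rpow_two] at h
  rw [loopIntegral,
    ← setIntegral_congr_fun measurableSet_Ioi (f := fun x : ℝ => x ^ 2 * exp (-x ^ 2))]
  · rw [h]; ring
  · intro x (hx : 0 < x)
    field_simp
    ring

end LoopIntegral

section Couplings

lemma continuousAt_fInt (k : ℕ) : ContinuousAt (fInt k) 0 := by
  have h : fInt k = fun u => 2 * √2 * loopIntegral 3 (k - 1) (k + 1) u := by
    funext u; unfold fInt loopIntegral; congr 2; funext x; ring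
  rw [h]
  exact continuousAt_const.mul (continuousAt_loopIntegral (by omega) (by norm_num))

lemma continuousAt_gInt (k : ℕ) : ContinuousAt (gInt k) 0 := by
  have h : gInt k = fun u => 2 * √2 * loopIntegral 2 k (k + 1) u := by
    funext u; unfold gInt loopIntegral; congr 2; funext x; ring
  rw [h]
  exact continuousAt_const.mul (continuousAt_loopIntegral (by omega) (by norm_num))

lemma continuousAt_fw : ContinuousAt fw 0 := by
  have h : fw = fun u => 9 * √2 * loopIntegral 2 0 2 u := by
    funext u; unfold fw loopIntegral; congr 2; funext x; rw [div_pow]; ring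
  rw [h]
  exact continuousAt_const.mul (continuousAt_loopIntegral (by omega) (by norm_num))

lemma continuousAt_gw : ContinuousAt gw 0 := by
  have h : gw = fun u => 9 * √2 * loopIntegral 1 1 2 u := by
    funext u; unfold gw loopIntegral; congr 2; funext x; rw [div_pow]; ring
  rw [h]
  exact continuousAt_const.mul (continuousAt_loopIntegral (by omega) (by norm_num))

lemma fInt_one_zero : fInt 1 0 = √(2 * π) / 2 := by
  have h : fInt 1 0 = 2 * √2 * loopIntegral 3 0 2 0 := by
    unfold fInt loopIntegral; congr 2; funext x; ring
  rw [h, loopIntegral_three_zero_two_zero, sqrt_mul zero_le_two]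
  ring

variable {α : Type*} {l : Filter α} {s t : α → ℝ}

lemma tendsto_eta (hs : Tendsto s l (𝓝 0)) (ht : Tendsto t l (𝓝 0)) :
    Tendsto (fun x => eta (s x) (t x)) l (𝓝 0) := by
  have hfw := (continuousAt_fw.tendsto.comp hs).mul ht
  have hgw := (continuousAt_gw.tendsto.comp hs).mul ht
  simpa [eta, Pi.div_def] using
    hfw.div (tendsto_const_nhds (x := (1 : ℝ)).sub (hgw.div_const 2)) (by simp)

lemma tendsto_Lk (k : ℕ) (hs : Tendsto s l (𝓝 0)) (ht : Tendsto t l (𝓝 0)) :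
    Tendsto (fun x => Lk k (s x) (t x)) l (𝓝 (2 * fInt k 0)) := by
  simpa [Lk] using (((continuousAt_fInt k).tendsto.comp hs).const_mul 2).add
    ((tendsto_eta hs ht).mul ((continuousAt_gInt k).tendsto.comp hs))

end Couplings

/-- No regularity of `a` is needed: `ℓ 0 = 0`, and `(a u - c) * ℓ u = o(‖u‖)`. -/
lemma hasFDerivAt_mul_clm_of_tendsto {E : Type*} [NormedAddCommGroup E] [NormedSpace ℝ E]
    {a : E → ℝ} {c : ℝ} (ha : Tendsto a (𝓝 0) (𝓝 c)) (ℓ : E →L[ℝ] ℝ) :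
    HasFDerivAt (fun u => a u * ℓ u) (c • ℓ) 0 := by
  rw [hasFDerivAt_iff_isLittleO_nhds_zero, ← isLittleO_norm_right]
  have hsmall : (fun u => a u - c) =o[𝓝 0] (fun _ => (1 : ℝ)) :=
    (isLittleO_one_iff ℝ).2 (by simpa using ha.sub_const c)
  simpa [sub_mul] using hsmall.mul_isBigO (ℓ.isBigO_id (𝓝 0)).norm_right

section GaussianFixedPoint

open ContinuousLinearMap

lemma gfpJac_mulVec (v : Fin 4 → ℝ) :
    gfpJac.mulVec v = ![-2 * v 0 - 6 * √(2 * π) * v 1,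
      -v 1 - 4 * √(2 * π) * v 2 - 16 * √(2 * π) * v 3, 0, 0] := by
  ext i
  fin_cases i <;> simp [gfpJac, Matrix.mulVec, dotProduct, Fin.sum_univ_four] <;> ring

lemma tendsto_coord (i : Fin 4) : Tendsto (fun u : Fin 4 → ℝ => u i) (𝓝 0) (𝓝 0) :=
  (continuous_apply i).tendsto' 0 0 rfl

lemma tendsto_eta_coord : Tendsto (fun u : Fin 4 → ℝ => eta (u 0) (u 1)) (𝓝 0) (𝓝 0) :=
  tendsto_eta (tendsto_coord 0) (tendsto_coord 1)

lemma tendsto_Lk_mul_coord (k : ℕ) :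
    Tendsto (fun u : Fin 4 → ℝ => Lk k (u 0) (u 1) * u 1) (𝓝 0) (𝓝 0) := by
  simpa using (tendsto_Lk k (tendsto_coord 0) (tendsto_coord 1)).mul (tendsto_coord 1)

lemma tendsto_Lk_one_coord :
    Tendsto (fun u : Fin 4 → ℝ => Lk 1 (u 0) (u 1)) (𝓝 0) (𝓝 √(2 * π)) := by
  convert tendsto_Lk 1 (tendsto_coord 0) (tendsto_coord 1) using 2
  rw [fInt_one_zero]; ring

lemma hasFDerivAt_beta2 :
    HasFDerivAt (fun u : Fin 4 → ℝ => beta2 (u 0) (u 1))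
      ((-2 : ℝ) • proj 0 + (-6 * √(2 * π)) • proj 1 :
        (Fin 4 → ℝ) →L[ℝ] ℝ) 0 := by
  have h₀ : Tendsto (fun u : Fin 4 → ℝ => -(2 + eta (u 0) (u 1))) (𝓝 0) (𝓝 (-2)) := by
    simpa using (tendsto_eta_coord.const_add 2).neg
  have hβ : (fun u : Fin 4 → ℝ => beta2 (u 0) (u 1)) = fun u =>
      -(2 + eta (u 0) (u 1)) * u 0 + -6 * Lk 1 (u 0) (u 1) * u 1 := by
    funext u; simp only [beta2]; ring
  rw [hβ]
  exact (hasFDerivAt_mul_clm_of_tendsto h₀ (proj 0)).fun_add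
    (hasFDerivAt_mul_clm_of_tendsto (tendsto_Lk_one_coord.const_mul (-6)) (proj 1))

lemma hasFDerivAt_beta4 :
    HasFDerivAt (fun u : Fin 4 → ℝ => beta4 (u 0) (u 1) (u 2) (u 3))
      ((-1 : ℝ) • proj 1 + (-4 * √(2 * π)) • proj 2 + (-16 * √(2 * π)) • proj 3 :
        (Fin 4 → ℝ) →L[ℝ] ℝ) 0 := by
  have h₁ : Tendsto (fun u : Fin 4 → ℝ =>
      -(1 + 2 * eta (u 0) (u 1)) + 4 * (Lk 2 (u 0) (u 1) * u 1)) (𝓝 0) (𝓝 (-1)) := by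
    simpa using ((tendsto_eta_coord.const_mul 2).const_add 1).neg.add
      ((tendsto_Lk_mul_coord 2).const_mul 4)
  have hβ : (fun u : Fin 4 → ℝ => beta4 (u 0) (u 1) (u 2) (u 3)) = fun u =>
      (-(1 + 2 * eta (u 0) (u 1)) + 4 * (Lk 2 (u 0) (u 1) * u 1)) * u 1 +
        -4 * Lk 1 (u 0) (u 1) * u 2 + -16 * Lk 1 (u 0) (u 1) * u 3 := by
    funext u; simp only [beta4]; ring
  rw [hβ]
  exact ((hasFDerivAt_mul_clm_of_tendsto h₁ (proj 1)).fun_add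
    (hasFDerivAt_mul_clm_of_tendsto (tendsto_Lk_one_coord.const_mul (-4)) (proj 2))).fun_add
    (hasFDerivAt_mul_clm_of_tendsto (tendsto_Lk_one_coord.const_mul (-16)) (proj 3))

lemma hasFDerivAt_beta61 :
    HasFDerivAt (fun u : Fin 4 → ℝ => beta61 (u 0) (u 1) (u 2))
      (0 : (Fin 4 → ℝ) →L[ℝ] ℝ) 0 := by
  have h₂ : Tendsto (fun u : Fin 4 → ℝ =>
      -3 * eta (u 0) (u 1) + 12 * (Lk 2 (u 0) (u 1) * u 1)) (𝓝 0) (𝓝 0) := by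
    simpa using (tendsto_eta_coord.const_mul (-3)).add ((tendsto_Lk_mul_coord 2).const_mul 12)
  have h₁ :
      Tendsto (fun u : Fin 4 → ℝ => -6 * (Lk 3 (u 0) (u 1) * u 1 * u 1)) (𝓝 0) (𝓝 0) := by
    simpa using ((tendsto_Lk_mul_coord 3).mul (tendsto_coord 1)).const_mul (-6)
  have hβ : (fun u : Fin 4 → ℝ => beta61 (u 0) (u 1) (u 2)) = fun u =>
      (-3 * eta (u 0) (u 1) + 12 * (Lk 2 (u 0) (u 1) * u 1)) * u 2 +
        -6 * (Lk 3 (u 0) (u 1) * u 1 * u 1) * u 1 := by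
    funext u; simp only [beta61]; ring
  rw [hβ]
  simpa using (hasFDerivAt_mul_clm_of_tendsto h₂ (proj (R := ℝ) 2)).fun_add
    (hasFDerivAt_mul_clm_of_tendsto h₁ (proj (R := ℝ) 1))

lemma hasFDerivAt_beta62 :
    HasFDerivAt (fun u : Fin 4 → ℝ => beta62 (u 0) (u 1) (u 3))
      (0 : (Fin 4 → ℝ) →L[ℝ] ℝ) 0 := by
  have h₃ : Tendsto (fun u : Fin 4 → ℝ =>
      -3 * eta (u 0) (u 1) + 8 * (Lk 2 (u 0) (u 1) * u 1)) (𝓝 0) (𝓝 0) := by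
    simpa using (tendsto_eta_coord.const_mul (-3)).add ((tendsto_Lk_mul_coord 2).const_mul 8)
  have hβ : (fun u : Fin 4 → ℝ => beta62 (u 0) (u 1) (u 3)) = fun u =>
      (-3 * eta (u 0) (u 1) + 8 * (Lk 2 (u 0) (u 1) * u 1)) * u 3 := by
    funext u; simp only [beta62]; ring
  rw [hβ]
  simpa using hasFDerivAt_mul_clm_of_tendsto h₃ (proj (R := ℝ) 3)

theorem hasFDerivAt_betaMap :
    HasFDerivAt betaMap (LinearMap.toContinuousLinearMap (Matrix.mulVecLin gfpJac)) 0 := by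
  rw [hasFDerivAt_pi']
  intro i
  fin_cases i
  · exact hasFDerivAt_beta2.congr_fderiv (by ext u; simp [gfpJac_mulVec]; ring)
  · exact hasFDerivAt_beta4.congr_fderiv (by ext u; simp [gfpJac_mulVec]; ring)
  · exact hasFDerivAt_beta61.congr_fderiv (by ext u; simp [gfpJac_mulVec])
  · exact hasFDerivAt_beta62.congr_fderiv (by ext u; simp [gfpJac_mulVec])

end GaussianFixedPoint

/-- **Linearization at the Gaussian fixed point.**  The truncated beta map is
differentiable at the origin with Jacobian matrix `gfpJac`, and `gfpJac` has
eigenvalues `-2, -1, 0, 0` with the indicated eigenvectors. -/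
theorem gaussian_fixed_point_linearization :
    HasFDerivAt betaMap
      (LinearMap.toContinuousLinearMap (Matrix.mulVecLin gfpJac)) 0 ∧
    gfpJac.mulVec ![1, 0, 0, 0] = (-2 : ℝ) • ![1, 0, 0, 0] ∧
    gfpJac.mulVec ![-6 * Real.sqrt (2 * π), 1, 0, 0] =
      (-1 : ℝ) • ![-6 * Real.sqrt (2 * π), 1, 0, 0] ∧
    gfpJac.mulVec ![0, 0, -4, 1] = (0 : ℝ) • ![0, 0, -4, 1] ∧
    gfpJac.mulVec ![96 * π, -16 * Real.sqrt (2 * π), 0, 1] =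
      (0 : ℝ) • ![96 * π, -16 * Real.sqrt (2 * π), 0, 1] := by
  have hsq : √(2 * π) * √(2 * π) = 2 * π := mul_self_sqrt (by positivity)
  refine ⟨hasFDerivAt_betaMap, ?_, ?_, ?_, ?_⟩ <;> rw [gfpJac_mulVec] <;> ext i <;>
    fin_cases i <;> simp [-sqrt_mul] <;> linarith
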